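/- Let α ≥ 3 and t > 0, and let f(x) = f_{α,1/2,t}(x) = (t cos(π/(2α))/π) · (x² + t²)/(x⁴ + t⁴ + 2x²t² cos(π/α)). Then f′(x) > 0 for all x < 0 and f′(x) < 0 for all x > 0; hence x = 0 is the unique stationary point of f and f attains its unique global maximum at x = 0 (f is unimodal). -/

import Mathlib

open Real

/-- The mixture-of-asymmetric-Cauchy probability density `f_{α,p,t}`. -/
noncomputable def cauchyMixDensity (α p t x : ℝ) : ℝ :=
  (t * Real.cos (π / (2 * α)) / π) *
    ((x ^ 2 + t ^ 2 + 2 * (2 * p - 1) * x * t * Real.sin (π / (2 * α))) /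
      (x ^ 4 + t ^ 4 + 2 * x ^ 2 * t ^ 2 * Real.cos (π / α)))

/-!
Up to the positive factor `t cos(π/(2α))/π`, the symmetric density is
`g(x) = (x² + t²) / (x⁴ + t⁴ + 2x²t²c)` with `c = cos(π/α)`, and `α ≥ 3` gives `c ≥ 1/2`.
The quotient rule gives `g′(x) = -2x (x⁴ + 2t²x² + (2c - 1)t⁴) / (x⁴ + t⁴ + 2x²t²c)²`, whose second
factor is positive for `x ≠ 0` once `c ≥ 1/2`; so `g′` has the sign of `-x`. The strict maximum at
`0` is the inequality `t²(x² + t²) < x⁴ + t⁴ + 2x²t²c`, i.e. `0 < x²(x² + (2c - 1)t²)`.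
-/

namespace CauchyMix

noncomputable def shape (t c x : ℝ) : ℝ :=
  (x ^ 2 + t ^ 2) / (x ^ 4 + t ^ 4 + 2 * x ^ 2 * t ^ 2 * c)

theorem cauchyMixDensity_one_half (α t : ℝ) :
    cauchyMixDensity α (1 / 2) t = fun x => t * cos (π / (2 * α)) / π * shape t (cos (π / α)) x := by
  funext x
  simp only [cauchyMixDensity, shape]
  ring

section Shape

variable {t c : ℝ}

theorem shape_denom_pos (ht : t ≠ 0) (hc : -1 < c) (x : ℝ) :
    0 < x ^ 4 + t ^ 4 + 2 * x ^ 2 * t ^ 2 * c := by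
  have ht4 : 0 < t ^ 4 := by positivity
  -- `x⁴ + t⁴ + 2x²t²c = (x² + ct²)² + (1 - c²)t⁴` for `|c| < 1`, and is a sum of squares for `c ≥ 0`
  nlinarith [sq_nonneg (x ^ 2 + c * t ^ 2), sq_nonneg (x ^ 2 - t ^ 2), sq_nonneg (x * t),
    mul_pos (by linarith : 0 < c + 1) ht4, sq_nonneg (x ^ 2), sq_nonneg (t ^ 2)]

theorem hasDerivAt_shape {x : ℝ} (hD : x ^ 4 + t ^ 4 + 2 * x ^ 2 * t ^ 2 * c ≠ 0) :
    HasDerivAt (shape t c)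
      (-2 * x * (x ^ 4 + 2 * t ^ 2 * x ^ 2 + (2 * c - 1) * t ^ 4) /
        (x ^ 4 + t ^ 4 + 2 * x ^ 2 * t ^ 2 * c) ^ 2) x := by
  have hN : HasDerivAt (fun x : ℝ => x ^ 2 + t ^ 2) (2 * x) x := by
    simpa using (hasDerivAt_pow 2 x).add_const (t ^ 2)
  have hD' : HasDerivAt (fun x : ℝ => x ^ 4 + t ^ 4 + 2 * x ^ 2 * t ^ 2 * c)
      (4 * x ^ 3 + 2 * (2 * x) * t ^ 2 * c) x :=
    (((hasDerivAt_pow 4 x).add_const (t ^ 4)).add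
      ((((hasDerivAt_pow 2 x).const_mul 2).mul_const (t ^ 2)).mul_const c)).congr_deriv (by ring)
  refine (hN.div hD' hD).congr_deriv ?_
  rw [div_eq_div_iff (pow_ne_zero 2 hD) (pow_ne_zero 2 hD)]
  ring

theorem deriv_shape (ht : t ≠ 0) (hc : -1 < c) (x : ℝ) :
    deriv (shape t c) x =
      -2 * x * (x ^ 4 + 2 * t ^ 2 * x ^ 2 + (2 * c - 1) * t ^ 4) /
        (x ^ 4 + t ^ 4 + 2 * x ^ 2 * t ^ 2 * c) ^ 2 :=
  (hasDerivAt_shape (shape_denom_pos ht hc x).ne').deriv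

theorem deriv_shape_factor_pos (hc : 1 / 2 ≤ c) {x : ℝ} (hx : x ≠ 0) :
    0 < x ^ 4 + 2 * t ^ 2 * x ^ 2 + (2 * c - 1) * t ^ 4 := by
  have hx4 : 0 < x ^ 4 := by positivity
  nlinarith [sq_nonneg (t * x), pow_nonneg (sq_nonneg t) 2]

theorem deriv_shape_pos_of_neg (ht : t ≠ 0) (hc : 1 / 2 ≤ c) {x : ℝ} (hx : x < 0) :
    0 < deriv (shape t c) x := by
  rw [deriv_shape ht (by linarith)]
  have := deriv_shape_factor_pos (t := t) hc hx.ne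
  have : 0 < -2 * x := by linarith
  positivity

theorem deriv_shape_neg_of_pos (ht : t ≠ 0) (hc : 1 / 2 ≤ c) {x : ℝ} (hx : 0 < x) :
    deriv (shape t c) x < 0 := by
  rw [deriv_shape ht (by linarith)]
  have hP := deriv_shape_factor_pos (t := t) hc hx.ne'
  have hD := shape_denom_pos ht (by linarith : -1 < c) x
  exact div_neg_of_neg_of_pos (by nlinarith) (by positivity)

theorem shape_lt_shape_zero (ht : t ≠ 0) (hc : 1 / 2 ≤ c) {x : ℝ} (hx : x ≠ 0) :
    shape t c x < shape t c 0 := by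
  have hx4 : 0 < x ^ 4 := by positivity
  have ht4 : 0 < t ^ 4 := by positivity
  simp only [shape]
  rw [div_lt_div_iff₀ (shape_denom_pos ht (by linarith) x) (by simpa using ht4)]
  nlinarith [mul_nonneg (by linarith : (0 : ℝ) ≤ 2 * c - 1) (sq_nonneg (x * t ^ 2))]

end Shape

theorem one_half_le_cos_pi_div {α : ℝ} (hα : 3 ≤ α) : 1 / 2 ≤ cos (π / α) := by
  rw [← cos_pi_div_three]
  apply cos_le_cos_of_nonneg_of_le_pi (by positivity) (by linarith [pi_pos])
  gcongr

theorem cos_pi_div_two_mul_pos {α : ℝ} (hα : 1 < α) : 0 < cos (π / (2 * α)) := by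
  have hα0 : 0 < α := by linarith
  apply cos_pos_of_mem_Ioo
  constructor
  · exact (neg_neg_of_pos (by positivity)).trans (by positivity)
  · rw [div_lt_div_iff₀ (by linarith) two_pos]
    nlinarith [pi_pos]

end CauchyMix

open CauchyMix in
/-- For `α ≥ 3` and `t > 0`, the symmetric density
`f = f_{α,1/2,t}` is unimodal: `f′ > 0` on `(−∞,0)`, `f′ < 0` on `(0,∞)`,
`x = 0` is the unique stationary point, and `f` attains its unique global
maximum at `x = 0`. -/
theorem cauchyMix_symmetric_unimodal (α t : ℝ) (hα : 3 ≤ α) (ht : 0 < t) :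
    (∀ x : ℝ, x < 0 → 0 < deriv (cauchyMixDensity α (1 / 2) t) x) ∧
    (∀ x : ℝ, 0 < x → deriv (cauchyMixDensity α (1 / 2) t) x < 0) ∧
    (∀ x : ℝ, deriv (cauchyMixDensity α (1 / 2) t) x = 0 ↔ x = 0) ∧
    (∀ x : ℝ, x ≠ 0 →
      cauchyMixDensity α (1 / 2) t x < cauchyMixDensity α (1 / 2) t 0) := by
  have hc := one_half_le_cos_pi_div hα
  have hK : 0 < t * cos (π / (2 * α)) / π := by
    have := cos_pi_div_two_mul_pos (by linarith : 1 < α)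
    positivity
  have hderiv : ∀ x, deriv (cauchyMixDensity α (1 / 2) t) x =
      t * cos (π / (2 * α)) / π * deriv (shape t (cos (π / α))) x := by
    intro x
    rw [cauchyMixDensity_one_half, deriv_const_mul_field']
  have hneg : ∀ x : ℝ, x < 0 → 0 < deriv (cauchyMixDensity α (1 / 2) t) x := fun x hx => by
    rw [hderiv]
    exact mul_pos hK (deriv_shape_pos_of_neg ht.ne' hc hx)
  have hpos : ∀ x : ℝ, 0 < x → deriv (cauchyMixDensity α (1 / 2) t) x < 0 := fun x hx => by
    rw [hderiv]
    exact mul_neg_of_pos_of_neg hK (deriv_shape_neg_of_pos ht.ne' hc hx)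
  refine ⟨hneg, hpos, fun x => ⟨fun h0 => ?_, ?_⟩, fun x hx => ?_⟩
  · by_contra hx
    rcases lt_or_gt_of_ne hx with hx | hx
    · exact (hneg x hx).ne' h0
    · exact (hpos x hx).ne h0
  · rintro rfl
    rw [hderiv, deriv_shape ht.ne' (by linarith)]
    simp
  · rw [cauchyMixDensity_one_half]
    exact mul_lt_mul_of_pos_left (shape_lt_shape_zero ht.ne' hc hx) hK
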